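/- arXiv:2602.10028 — 2 statements merged into one kernel-verified Lean document; each statement's English description precedes it below -/
import Mathlib

section
/- Let λ ∈ 𝔽_q^*, m a positive integer with gcd(m, g) = 1 and g ≡ 1 (mod ord(λ)), and h(x) ∈ 𝔽_q[x] with gcd(h(x), x^m − λ) = 1. Then the 𝔽_q-linear map φ on 𝔽_q[x]/(x^m − λ) given by φ(Q̄(x)) = Q̄(x^g)·h̄(x) is bijective. -/
/-!
Write `x` for the class of `X` in `R = 𝔽_q[X]/(X^m - λ)`. Since `λ^g = λ`, the power `x^g` is
again a root of `X^m - λ`, so `Q ↦ Q(X^g)` is an algebra endomorphism `σ_g` of `R`, and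
`φ = h̄ · σ_g` with `h̄` a unit. As `x^m = λ` and `λ^{ord λ} = 1`, powers of `x` only depend
on the exponent modulo `m · ord λ`, to which `g` is coprime; for an inverse `g'` of `g` modulo
`m · ord λ`, `σ_{g'}` is then inverse to `σ_g`.
-/

open Polynomial

theorem Nat.exists_mul_modEq_one_of_coprime {g n : ℕ} (h : g.Coprime n) :
    ∃ g' : ℕ, g * g' ≡ 1 [MOD n] := by
  rcases n.eq_zero_or_pos with rfl | hn
  · exact ⟨1, by rw [(Nat.coprime_zero_right g).1 h]⟩
  · obtain ⟨k, hk⟩ := Nat.exists_eq_add_one.2 (Nat.totient_pos.2 hn)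
    refine ⟨g ^ k, ?_⟩
    rw [← _root_.pow_succ', ← hk]
    exact Nat.ModEq.pow_totient h

theorem Ideal.Quotient.isUnit_mk_of_isCoprime {A : Type*} [CommRing A] {a b : A}
    (h : IsCoprime a b) : IsUnit (Ideal.Quotient.mk (Ideal.span {b}) a) := by
  obtain ⟨u, v, huv⟩ := h
  have hvb : Ideal.Quotient.mk (Ideal.span {b}) (v * b) = 0 :=
    Ideal.Quotient.eq_zero_iff_mem.2 (Ideal.mem_span_singleton.2 (dvd_mul_left b v))
  refine IsUnit.of_mul_eq_one (Ideal.Quotient.mk _ u) ?_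
  rw [← map_mul, mul_comm, ← map_one (Ideal.Quotient.mk _), ← huv, map_add, hvb, add_zero]

theorem pow_eq_self_of_modEq_one {M : Type*} [Monoid M] {x : M} {n : ℕ}
    (h : n ≡ 1 [MOD orderOf x]) : x ^ n = x :=
  (pow_eq_pow_of_modEq h (pow_orderOf_eq_one x)).trans (pow_one x)

namespace Polynomial

variable {R : Type*} [CommRing R]

noncomputable def quotientCompXPow (f : R[X]) (g : ℕ) (hf : f ∣ f.comp (X ^ g)) :
    R[X] ⧸ Ideal.span {f} →ₐ[R] R[X] ⧸ Ideal.span {f} :=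
  Ideal.quotientMapₐ _ (aeval (X ^ g)) <| (Ideal.span_singleton_le_iff_mem _).2 <|
    Ideal.mem_comap.2 <| Ideal.mem_span_singleton.2 hf

theorem quotientCompXPow_mk {f : R[X]} {g : ℕ} (hf : f ∣ f.comp (X ^ g)) (Q : R[X]) :
    quotientCompXPow f g hf (Ideal.Quotient.mk _ Q) = Ideal.Quotient.mk _ (Q.comp (X ^ g)) :=
  rfl

theorem quotientCompXPow_comp_eq_id {f : R[X]} {g g' : ℕ} (hg : f ∣ f.comp (X ^ g))
    (hg' : f ∣ f.comp (X ^ g'))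
    (hX : Ideal.Quotient.mk (Ideal.span {f}) X ^ (g * g') = Ideal.Quotient.mk _ X) :
    (quotientCompXPow f g' hg').comp (quotientCompXPow f g hg) = AlgHom.id R _ := by
  refine Ideal.Quotient.algHom_ext R (Polynomial.algHom_ext ?_)
  simp only [AlgHom.comp_apply, Ideal.Quotient.mkₐ_eq_mk, quotientCompXPow_mk, AlgHom.id_apply]
  rw [X_comp, X_pow_comp, ← pow_mul, map_pow, mul_comm, hX]

theorem quotientCompXPow_bijective {f : R[X]} {g g' : ℕ} (hg : f ∣ f.comp (X ^ g))
    (hg' : f ∣ f.comp (X ^ g'))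
    (hX : Ideal.Quotient.mk (Ideal.span {f}) X ^ (g * g') = Ideal.Quotient.mk _ X) :
    Function.Bijective (quotientCompXPow f g hg) := by
  have hX' : Ideal.Quotient.mk (Ideal.span {f}) X ^ (g' * g) = Ideal.Quotient.mk _ X := by
    rwa [mul_comm]
  exact Function.bijective_iff_has_inverse.2 ⟨quotientCompXPow f g' hg',
    AlgHom.congr_fun (quotientCompXPow_comp_eq_id hg hg' hX),
    AlgHom.congr_fun (quotientCompXPow_comp_eq_id hg' hg hX')⟩

theorem X_pow_sub_C_dvd_comp_X_pow {m g : ℕ} {lam : R} (hlam : lam ^ g = lam) :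
    X ^ m - C lam ∣ (X ^ m - C lam).comp (X ^ g) := by
  have h := sub_dvd_pow_sub_pow (X ^ m) (C lam) g
  rw [← pow_mul, ← C_pow, hlam, mul_comm] at h
  simpa [sub_comp, ← pow_mul] using h

theorem mk_X_pow_eq_of_modEq {m o a b : ℕ} {lam : R} (hlam : lam ^ o = 1)
    (hab : a ≡ b [MOD m * o]) :
    Ideal.Quotient.mk (Ideal.span {X ^ m - C lam}) X ^ a = Ideal.Quotient.mk _ X ^ b := by
  have hXm :
      Ideal.Quotient.mk (Ideal.span {X ^ m - C lam}) X ^ m = Ideal.Quotient.mk _ (C lam) := by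
    rw [← map_pow, Ideal.Quotient.eq, Ideal.mem_span_singleton]
  refine pow_eq_pow_of_modEq hab ?_
  rw [pow_mul, hXm, ← map_pow, ← C_pow, hlam, map_one, map_one]

end Polynomial

theorem stmt_4_general (F : Type*) [Field F] (m g : ℕ)
    (lam : F) (hmg : Nat.gcd m g = 1)
    (hcong : g ≡ 1 [MOD orderOf lam]) (h : F[X])
    (hcop : IsCoprime h (X ^ m - C lam))
    (φ : (F[X] ⧸ Ideal.span {X ^ m - C lam}) →ₗ[F] (F[X] ⧸ Ideal.span {X ^ m - C lam}))
    (hφ : ∀ Q : F[X],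
        φ (Ideal.Quotient.mk (Ideal.span {X ^ m - C lam}) Q) =
          Ideal.Quotient.mk (Ideal.span {X ^ m - C lam}) (Q.comp (X ^ g) * h)) :
    Function.Bijective φ := by
  have hlam_g : lam ^ g = lam := pow_eq_self_of_modEq_one hcong
  have hg_coprime : g.Coprime (m * orderOf lam) :=
    (Nat.coprime_comm.1 hmg).mul_right (by simpa using hcong.gcd_eq)
  obtain ⟨g', hgg'⟩ := Nat.exists_mul_modEq_one_of_coprime hg_coprime
  have hlam_g' : lam ^ g' = lam := calc
    lam ^ g' = lam ^ (g * g') := by rw [pow_mul, hlam_g]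
    _ = lam := pow_eq_self_of_modEq_one (hgg'.of_mul_left m)
  set σ := quotientCompXPow _ g (X_pow_sub_C_dvd_comp_X_pow (m := m) hlam_g)
  have hσ : Function.Bijective σ :=
    quotientCompXPow_bijective _ (X_pow_sub_C_dvd_comp_X_pow hlam_g')
      ((mk_X_pow_eq_of_modEq (pow_orderOf_eq_one lam) hgg').trans (pow_one _))
  obtain ⟨u, hu⟩ := Ideal.Quotient.isUnit_mk_of_isCoprime hcop
  have hφσ : ⇑φ = Units.mulRight u ∘ σ := by
    funext a
    obtain ⟨Q, rfl⟩ := Ideal.Quotient.mk_surjective a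
    rw [hφ, Function.comp_apply, quotientCompXPow_mk, Units.mulRight_apply, hu, map_mul]
  rw [hφσ]
  exact (Units.mulRight u).bijective.comp hσ

theorem stmt_4 (F : Type*) [Field F] [Fintype F] (m g : ℕ) (hm : 0 < m) (hg : 0 < g)
    (lam : F) (hlam : lam ≠ 0) (hmg : Nat.gcd m g = 1)
    (hcong : g ≡ 1 [MOD orderOf lam]) (h : F[X])
    (hcop : IsCoprime h (X ^ m - C lam))
    (φ : (F[X] ⧸ Ideal.span {X ^ m - C lam}) →ₗ[F] (F[X] ⧸ Ideal.span {X ^ m - C lam}))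
    (hφ : ∀ Q : F[X],
        φ (Ideal.Quotient.mk (Ideal.span {X ^ m - C lam}) Q) =
          Ideal.Quotient.mk (Ideal.span {X ^ m - C lam}) (Q.comp (X ^ g) * h)) :
    Function.Bijective φ :=
  stmt_4_general F m g lam hmg hcong h hcop φ hφ
end

section
/- Let h ∈ R = 𝔽_q[x]/(x³ − 1) be a unit and let A be the 3 × 3 circulant matrix of multiplication by h in the monomial basis. Then A is MDS if and only if both h and h^{-1} have Hamming weight 3. -/
/-!
For an invertible `3 × 3` matrix `A`, the `1 × 1` minors are its entries, the `3 × 3` minor is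
`det A ≠ 0`, and the `2 × 2` minors are, up to sign, the entries of `adj A = det A • A⁻¹`. So `A` is
MDS iff `A` and `A⁻¹` have no zero entry. For multiplication by `h` in `F[x]/(x³ - 1)` the inverse
matrix is multiplication by `h⁻¹`, and since `x³ = 1` both matrices are circulant: their entries
are exactly the coefficients of `h`, resp. `h⁻¹`.
-/

open Polynomial

def IsMDS {n : Type*} [Fintype n] [DecidableEq n] {F : Type*} [CommRing F]
    (A : Matrix n n F) : Prop :=
  ∀ (k : ℕ) (r c : Fin k → n), Function.Injective r → Function.Injective c →
    (A.submatrix r c).det ≠ 0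

open Matrix

section MDS

variable {K : Type*} [Field K]

theorem isMDS_reindex {m n : Type*} [Fintype m] [DecidableEq m] [Fintype n] [DecidableEq n]
    (e : m ≃ n) (A : Matrix m m K) :
    IsMDS (reindex e e A) ↔ IsMDS A := by
  constructor
  · intro h k r c hr hc
    simpa [reindex_apply, Function.comp_def] using
      h k (e ∘ r) (e ∘ c) (e.injective.comp hr) (e.injective.comp hc)
  · intro h k r c hr hc
    exact h k _ _ (e.symm.injective.comp hr) (e.symm.injective.comp hc)

theorem det_submatrix_perm_ne_zero_iff {n : Type*} [Fintype n] [DecidableEq n]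
    (M : Matrix n n K) (σ τ : Equiv.Perm n) :
    (M.submatrix σ τ).det ≠ 0 ↔ M.det ≠ 0 := by
  have h := det_permute' τ (M.submatrix σ id)
  rw [submatrix_submatrix, det_permute] at h
  rcases Int.units_eq_one_or (Equiv.Perm.sign σ) with hσ | hσ <;>
    rcases Int.units_eq_one_or (Equiv.Perm.sign τ) with hτ | hτ <;>
    simp [hσ, hτ] at h <;> simp [h]

theorem Fin.exists_succAbove_comp_perm_eq_of_injective {n : ℕ} {r : Fin n → Fin (n + 1)}
    (hr : r.Injective) : ∃ (j : Fin (n + 1)) (σ : Equiv.Perm (Fin n)), j.succAbove ∘ σ = r := by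
  obtain ⟨j, hj⟩ : ∃ j, j ∉ Set.range r := by
    by_contra! h
    have := Fintype.card_le_of_surjective r (Set.range_eq_univ.mp (Set.eq_univ_of_forall h))
    simp at this
  choose σ hσ using fun k => Fin.exists_succAbove_eq (x := r k) (y := j) fun h => hj ⟨k, h⟩
  have hσinj : σ.Injective := fun a b hab => hr (by rw [← hσ a, ← hσ b, hab])
  exact ⟨j, Equiv.ofBijective σ (Finite.injective_iff_bijective.mp hσinj), funext hσ⟩

-- The maximal proper minors are, up to sign, the entries of the adjugate.
theorem forall_det_submatrix_ne_zero_iff_adjugate {n : ℕ}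
    (A : Matrix (Fin (n + 1)) (Fin (n + 1)) K) :
    (∀ r c : Fin n → Fin (n + 1), r.Injective → c.Injective → (A.submatrix r c).det ≠ 0) ↔
      ∀ i j, A.adjugate i j ≠ 0 := by
  simp_rw [adjugate_fin_succ_eq_det_submatrix]
  constructor
  · intro h i j
    exact mul_ne_zero (pow_ne_zero _ (neg_ne_zero.mpr one_ne_zero))
      (h _ _ Fin.succAbove_right_injective Fin.succAbove_right_injective)
  · intro h r c hr hc
    obtain ⟨j, σ, rfl⟩ := Fin.exists_succAbove_comp_perm_eq_of_injective hr
    obtain ⟨i, τ, rfl⟩ := Fin.exists_succAbove_comp_perm_eq_of_injective hc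
    rw [← submatrix_submatrix, det_submatrix_perm_ne_zero_iff]
    exact right_ne_zero_of_mul (h i j)

theorem isMDS_fin_three_iff (A : Matrix (Fin 3) (Fin 3) K) :
    IsMDS A ↔ (∀ i j, A i j ≠ 0) ∧ (∀ i j, A.adjugate i j ≠ 0) ∧ A.det ≠ 0 := by
  rw [← forall_det_submatrix_ne_zero_iff_adjugate]
  constructor
  · intro h
    refine ⟨fun i j => ?_, h 2,
      by simpa using h 3 id id Function.injective_id Function.injective_id⟩
    have h1 := h 1 ![i] ![j] (Function.injective_of_subsingleton _)
      (Function.injective_of_subsingleton _)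
    rwa [det_fin_one] at h1
  · rintro ⟨hentry, hminor, hdet⟩ k r c hr hc
    have hk : k ≤ 3 := by simpa using Fintype.card_le_of_injective r hr
    interval_cases k
    · simp
    · simpa using hentry (r 0) (c 0)
    · exact hminor r c hr hc
    · exact (det_submatrix_perm_ne_zero_iff A
        (.ofBijective r (Finite.injective_iff_bijective.mp hr))
        (.ofBijective c (Finite.injective_iff_bijective.mp hc))).mpr hdet

theorem isMDS_fin_three_iff_of_mul_eq_one {A B : Matrix (Fin 3) (Fin 3) K} (h : A * B = 1) :
    IsMDS A ↔ (∀ i j, A i j ≠ 0) ∧ ∀ i j, B i j ≠ 0 := by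
  have hdet : A.det ≠ 0 := left_ne_zero_of_mul_eq_one (by rw [← det_mul, h, det_one])
  have hadj : A.adjugate = A.det • B := by
    calc A.adjugate = B * A * A.adjugate := by rw [mul_eq_one_comm.mp h, Matrix.one_mul]
    _ = A.det • B := by rw [Matrix.mul_assoc, mul_adjugate, Matrix.mul_smul, Matrix.mul_one]
  simp [isMDS_fin_three_iff, hadj, hdet]

theorem isMDS_iff_of_mul_eq_one {n : Type*} [Fintype n] [DecidableEq n] (hn : Fintype.card n = 3)
    {A B : Matrix n n K} (h : A * B = 1) :
    IsMDS A ↔ (∀ i j, A i j ≠ 0) ∧ ∀ i j, B i j ≠ 0 := by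
  let e := Fintype.equivFinOfCardEq hn
  have h' : reindex e e A * reindex e e B = 1 := by
    rw [reindex_apply, reindex_apply, submatrix_mul_equiv, h, submatrix_one_equiv]
  rw [← isMDS_reindex e, isMDS_fin_three_iff_of_mul_eq_one h']
  simp only [reindex_apply, submatrix_apply, e.forall_congr_left]

end MDS

namespace PowerBasis

variable {K S : Type*} [Field K] [CommRing S] [Algebra K S]

theorem repr_gen_pow_mul (pb : PowerBasis K S) (hgen : pb.gen ^ pb.dim = 1)
    (j : Fin pb.dim) (v : S) (i : Fin pb.dim) :
    pb.basis.repr (pb.gen ^ (j : ℕ) * v) i = pb.basis.repr v (i - j) := by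
  have : NeZero pb.dim := ⟨j.pos.ne'⟩
  have hshift (k : Fin pb.dim) : pb.gen ^ (j : ℕ) * pb.basis k = pb.basis (k + j) := by
    rw [pb.basis_eq_pow, pb.basis_eq_pow, ← pow_add, pow_eq_pow_mod _ hgen, Fin.val_add, add_comm]
  have hcoord : (pb.basis.coord i).comp (LinearMap.mulLeft K (pb.gen ^ (j : ℕ))) =
      pb.basis.coord (i - j) :=
    pb.basis.ext fun k => by
      rw [LinearMap.comp_apply, LinearMap.mulLeft_apply, hshift, Module.Basis.coord_apply,
        Module.Basis.coord_apply, Module.Basis.repr_self, Module.Basis.repr_self,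
        Finsupp.single_apply, Finsupp.single_apply]
      simp only [eq_sub_iff_add_eq]
  exact LinearMap.congr_fun hcoord v

theorem toMatrix_mulRight_apply (pb : PowerBasis K S) (hgen : pb.gen ^ pb.dim = 1) (v : S)
    (i j : Fin pb.dim) :
    LinearMap.toMatrix pb.basis pb.basis (LinearMap.mulRight K v) i j =
      pb.basis.repr v (i - j) := by
  rw [LinearMap.toMatrix_apply, LinearMap.mulRight_apply, pb.basis_eq_pow,
    repr_gen_pow_mul pb hgen]

theorem forall_toMatrix_mulRight_ne_zero_iff (pb : PowerBasis K S) (hgen : pb.gen ^ pb.dim = 1)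
    (v : S) :
    (∀ i j, LinearMap.toMatrix pb.basis pb.basis (LinearMap.mulRight K v) i j ≠ 0) ↔
      ∀ i, pb.basis.repr v i ≠ 0 := by
  simp only [pb.toMatrix_mulRight_apply hgen]
  refine ⟨fun h i => ?_, fun h i j => h _⟩
  have : NeZero pb.dim := ⟨i.pos.ne'⟩
  simpa using h i 0

end PowerBasis

theorem Finsupp.card_support_eq_iff_forall_ne_zero {ι M : Type*} [Fintype ι] [Zero M] {n : ℕ}
    (hn : Fintype.card ι = n) (f : ι →₀ M) :
    f.support.card = n ↔ ∀ i, f i ≠ 0 := by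
  simp [← hn, Finset.card_eq_iff_eq_univ, Finset.eq_univ_iff_forall]

theorem AdjoinRoot.root_X_pow_sub_one_pow {R : Type*} [CommRing R] (n : ℕ) :
    root (X ^ n - 1 : R[X]) ^ n = 1 := by
  have h := mk_self (f := (X ^ n - 1 : R[X]))
  rwa [map_sub, map_pow, mk_X, map_one, sub_eq_zero] at h

theorem stmt_17_general (F : Type*) [Field F]
    (hmon : (X ^ 3 - 1 : F[X]).Monic)
    (u : (AdjoinRoot (X ^ 3 - 1 : F[X]))ˣ)
    (pb : PowerBasis F (AdjoinRoot (X ^ 3 - 1 : F[X])))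
    (hpb : pb = AdjoinRoot.powerBasis' hmon)
    (A : Matrix (Fin pb.dim) (Fin pb.dim) F)
    (hA : A = LinearMap.toMatrix pb.basis pb.basis
      (LinearMap.mulRight F (u : AdjoinRoot (X ^ 3 - 1 : F[X])))) :
    IsMDS A ↔
      ((pb.basis.repr ((u : (AdjoinRoot (X ^ 3 - 1 : F[X]))ˣ) :
          AdjoinRoot (X ^ 3 - 1 : F[X]))).support.card = 3 ∧
        (pb.basis.repr ((u⁻¹ : (AdjoinRoot (X ^ 3 - 1 : F[X]))ˣ) :
          AdjoinRoot (X ^ 3 - 1 : F[X]))).support.card = 3) := by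
  have hdim : pb.dim = 3 := by
    rw [hpb, AdjoinRoot.powerBasis'_dim, ← C_1, natDegree_X_pow_sub_C]
  have hgen : pb.gen ^ pb.dim = 1 := by
    rw [hdim, hpb, AdjoinRoot.powerBasis'_gen, AdjoinRoot.root_X_pow_sub_one_pow]
  have hinv : A * LinearMap.toMatrix pb.basis pb.basis (LinearMap.mulRight F ↑u⁻¹) = 1 := by
    rw [hA, ← LinearMap.toMatrix_mul, Module.End.mul_eq_comp, ← LinearMap.mulRight_mul,
      Units.inv_mul, LinearMap.mulRight_one, LinearMap.toMatrix_id]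
  have hcard : Fintype.card (Fin pb.dim) = 3 := by rw [Fintype.card_fin, hdim]
  rw [isMDS_iff_of_mul_eq_one hcard hinv, hA, Finsupp.card_support_eq_iff_forall_ne_zero hcard,
    Finsupp.card_support_eq_iff_forall_ne_zero hcard, pb.forall_toMatrix_mulRight_ne_zero_iff hgen,
    pb.forall_toMatrix_mulRight_ne_zero_iff hgen]

theorem stmt_17 (F : Type*) [Field F] [Fintype F]
    (hmon : (X ^ 3 - 1 : F[X]).Monic)
    (u : (AdjoinRoot (X ^ 3 - 1 : F[X]))ˣ)
    (pb : PowerBasis F (AdjoinRoot (X ^ 3 - 1 : F[X])))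
    (hpb : pb = AdjoinRoot.powerBasis' hmon)
    (A : Matrix (Fin pb.dim) (Fin pb.dim) F)
    (hA : A = LinearMap.toMatrix pb.basis pb.basis
      (LinearMap.mulRight F (u : AdjoinRoot (X ^ 3 - 1 : F[X])))) :
    IsMDS A ↔
      ((pb.basis.repr ((u : (AdjoinRoot (X ^ 3 - 1 : F[X]))ˣ) :
          AdjoinRoot (X ^ 3 - 1 : F[X]))).support.card = 3 ∧
        (pb.basis.repr ((u⁻¹ : (AdjoinRoot (X ^ 3 - 1 : F[X]))ˣ) :
          AdjoinRoot (X ^ 3 - 1 : F[X]))).support.card = 3) :=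
  stmt_17_general F hmon u pb hpb A hA
end
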